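/- arXiv:1712.01820 — 2 statements merged into one kernel-verified Lean document; each statement's English description precedes it below -/
import Mathlib

section
/- Let A be a unital C*-algebra, X a finite set, U = (u_{xy})_{x,y∈X} a magic unitary over A, and M a complex X × X matrix. Then MU = UM (as matrices over A, with M acting through the ℂ-algebra structure of A) if and only if for all x, v, w, z ∈ X with u_{xw}·u_{vz} ≠ 0 one has M_{xv} = M_{wz}. -/
/-!
Rows and columns of a magic unitary are partitions of unity into pairwise orthogonal
projections, so compressing an element `a` to `u x w * a * u v z` singles out one summand
of a matrix product: the compressions of `(MU)_{xz}` and `(UM)_{xz}` are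
`M x v • (u x w * u v z)` and `M w z • (u x w * u v z)`. Since `a` is the sum of all its
compressions, `MU = UM` holds exactly when the coefficients agree wherever
`u x w * u v z ≠ 0`.
-/

open Finset

theorem sum_sum_mul_mul_eq_of_sum_eq_one {R ι κ : Type*} [NonAssocSemiring R]
    [Fintype ι] [Fintype κ] {p : ι → R} {q : κ → R}
    (hp : ∑ i, p i = 1) (hq : ∑ j, q j = 1) (a : R) :
    ∑ i, ∑ j, p i * a * q j = a := by
  rw [← Fintype.sum_mul_sum, ← sum_mul, hp, hq, one_mul, mul_one]

section PartitionOfUnity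

variable {A : Type*} [CStarAlgebra A] {ι : Type*} [Fintype ι] {p : ι → A}

theorem IsStarProjection.mul_eq_zero_of_sum_eq_one (hp : ∀ i, IsStarProjection (p i))
    (hsum : ∑ i, p i = 1) {i j : ι} (hij : i ≠ j) : p i * p j = 0 := by
  classical
  let := CStarAlgebra.spectralOrder A
  have := CStarAlgebra.spectralOrderedRing A
  have hle : p i + p j ≤ 1 := by
    calc p i + p j = ∑ k ∈ {i, j}, p k := (sum_pair hij).symm
      _ ≤ ∑ k, p k := sum_le_univ_sum_of_nonneg fun k => (hp k).nonneg
      _ = 1 := hsum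
  have hmul : p i * (1 - p j) = p i :=
    ((hp i).le_iff_mul_eq_left (hp j).one_sub).mp (le_sub_iff_add_le.mpr hle)
  rwa [mul_sub, mul_one, sub_eq_self] at hmul

theorem IsStarProjection.sum_smul_mul_of_sum_eq_one (hp : ∀ i, IsStarProjection (p i))
    (hsum : ∑ i, p i = 1) (c : ι → ℂ) (j : ι) :
    (∑ i, c i • p i) * p j = c j • p j := by
  rw [sum_mul, sum_eq_single j]
  · rw [smul_mul_assoc, (hp j).isIdempotentElem.eq]
  · intro i _ hij
    rw [smul_mul_assoc, mul_eq_zero_of_sum_eq_one hp hsum hij, smul_zero]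
  · exact absurd (mem_univ j)

theorem IsStarProjection.mul_sum_smul_of_sum_eq_one (hp : ∀ i, IsStarProjection (p i))
    (hsum : ∑ i, p i = 1) (c : ι → ℂ) (j : ι) :
    p j * (∑ i, c i • p i) = c j • p j := by
  rw [mul_sum, sum_eq_single j]
  · rw [mul_smul_comm, (hp j).isIdempotentElem.eq]
  · intro i _ hij
    rw [mul_smul_comm, mul_eq_zero_of_sum_eq_one hp hsum hij.symm, smul_zero]
  · exact absurd (mem_univ j)

end PartitionOfUnity

structure IsMagicUnitary {A X : Type*} [Semiring A] [Star A] [Fintype X] (u : X → X → A) :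
    Prop where
  isStarProjection : ∀ x y, IsStarProjection (u x y)
  sum_row : ∀ x, ∑ y, u x y = 1
  sum_col : ∀ y, ∑ x, u x y = 1

namespace IsMagicUnitary

variable {A : Type*} [CStarAlgebra A] {X : Type*} [Fintype X] {u : X → X → A}

theorem mul_sum_smul_col_mul (hu : IsMagicUnitary u) (M : Matrix X X ℂ) (x w v z : X) :
    u x w * (∑ y, M x y • u y z) * u v z = M x v • (u x w * u v z) := by
  rw [mul_assoc, IsStarProjection.sum_smul_mul_of_sum_eq_one (fun y => hu.isStarProjection y z)
    (hu.sum_col z), mul_smul_comm]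

theorem mul_sum_smul_row_mul (hu : IsMagicUnitary u) (M : Matrix X X ℂ) (x w v z : X) :
    u x w * (∑ y, M y z • u x y) * u v z = M w z • (u x w * u v z) := by
  rw [IsStarProjection.mul_sum_smul_of_sum_eq_one (hu.isStarProjection x) (hu.sum_row x),
    smul_mul_assoc]

theorem matrix_mul_eq_mul_matrix_iff (hu : IsMagicUnitary u) (M : Matrix X X ℂ) (x z : X) :
    ∑ y, M x y • u y z = ∑ y, M y z • u x y ↔
      ∀ w v, M x v • (u x w * u v z) = M w z • (u x w * u v z) := by
  constructor
  · intro h w v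
    rw [← hu.mul_sum_smul_col_mul, ← hu.mul_sum_smul_row_mul, h]
  · intro h
    rw [← sum_sum_mul_mul_eq_of_sum_eq_one (hu.sum_row x) (hu.sum_col z) (∑ y, M x y • u y z),
      ← sum_sum_mul_mul_eq_of_sum_eq_one (hu.sum_row x) (hu.sum_col z) (∑ y, M y z • u x y)]
    simp only [hu.mul_sum_smul_col_mul, hu.mul_sum_smul_row_mul, h]

end IsMagicUnitary

theorem commutes_iff_constant_on_orbitals_general {A : Type*} [CStarAlgebra A] {X : Type*}
    [Fintype X] (u : X → X → A)
    (hstar : ∀ x y, star (u x y) = u x y)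
    (hidem : ∀ x y, u x y * u x y = u x y)
    (hrow : ∀ x, ∑ y, u x y = 1)
    (hcol : ∀ x, ∑ y, u y x = 1)
    (M : Matrix X X ℂ) :
    (∀ x z, ∑ y, M x y • u y z = ∑ y, M y z • u x y) ↔
      (∀ x v w z, u x w * u v z ≠ 0 → M x v = M w z) := by
  have hu : IsMagicUnitary u := ⟨fun x y => ⟨hidem x y, hstar x y⟩, hrow, hcol⟩
  simp only [hu.matrix_mul_eq_mul_matrix_iff]
  refine ⟨fun h x v w z hne => smul_left_injective ℂ hne (h x z w v), fun h x z w v => ?_⟩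
  by_cases hzero : u x w * u v z = 0
  · rw [hzero, smul_zero, smul_zero]
  · rw [h x v w z hzero]

/-- A complex matrix `M` commutes with a magic unitary `U`
(`(MU)_{xz} = ∑ y, M x y • u y z`, `(UM)_{xz} = ∑ y, M y z • u x y`) if and only if `M`
is constant on the orbitals: `M x v = M w z` whenever `u x w * u v z ≠ 0`. -/
theorem commutes_iff_constant_on_orbitals {A : Type*} [CStarAlgebra A] {X : Type*}
    [Fintype X] [DecidableEq X] (u : X → X → A)
    (hstar : ∀ x y, star (u x y) = u x y)
    (hidem : ∀ x y, u x y * u x y = u x y)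
    (hrow : ∀ x, ∑ y, u x y = 1)
    (hcol : ∀ x, ∑ y, u y x = 1)
    (M : Matrix X X ℂ) :
    (∀ x z, ∑ y, M x y • u y z = ∑ y, M y z • u x y) ↔
      (∀ x v w z, u x w * u v z ≠ 0 → M x v = M w z) :=
  commutes_iff_constant_on_orbitals_general u hstar hidem hrow hcol M
end

section
/- Let X and Y be finite simple graphs with complex adjacency matrices A_X and A_Y, let A be a unital C*-algebra, and let U = (u_{xy})_{x∈V(X), y∈V(Y)} be a magic unitary over A with A_X·U = U·A_Y. If u_{xy}·u_{x'y'} ≠ 0 for some x, x' ∈ V(X) and y, y' ∈ V(Y), then for every natural number ℓ the (x,x') entry of A_X^ℓ equals the (y,y') entry of A_Y^ℓ (i.e., X has the same number of walks of length ℓ from x to x' as Y has from y to y'); consequently x and x' are joined by a walk in X if and only if y and y' are joined by a walk in Y, and in that case the graph distance from x to x' in X equals the graph distance from y to y' in Y. -/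
/-!
The intertwining `A_X U = U A_Y` passes to powers. Multiplying the `(x, y')` entry of
`A_X^ℓ U = U A_Y^ℓ` by `u x y` on the left and by `u x' y'` on the right, orthogonality of the
projections within a row and within a column of a magic unitary leaves only
`(A_X^ℓ) x x' • u x y u x' y' = (A_Y^ℓ) y y' • u x y u x' y'`, and `u x y u x' y' ≠ 0`.
Equal walk counts for every length mean equal sets of walk lengths, hence the same
reachability and the same distance.
-/

open Finset

/- `∑_{k ≠ i} p_i p_k p_i = p_i (1 - p_i) p_i = 0` is a sum of positive terms
`(p_k p_i)* (p_k p_i)`, so each vanishes, and the C*-identity gives `p_k p_i = 0`. -/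
lemma mul_eq_zero_of_sum_eq_one {A ι : Type*} [CStarAlgebra A] [Fintype ι] [DecidableEq ι]
    (p : ι → A) (hstar : ∀ i, star (p i) = p i) (hidem : ∀ i, p i * p i = p i)
    (hsum : ∑ i, p i = 1) {i j : ι} (hij : i ≠ j) : p i * p j = 0 := by
  let := CStarAlgebra.spectralOrder A
  let := CStarAlgebra.spectralOrderedRing A
  have hsandwich (k : ι) : p i * p k * p i = star (p k * p i) * (p k * p i) := by
    rw [star_mul, hstar, hstar]
    calc p i * p k * p i = p i * (p k * p k) * p i := by rw [hidem]
      _ = p i * p k * (p k * p i) := by noncomm_ring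
  have hsum_sandwich : ∑ k ∈ univ.erase i, p i * p k * p i = 0 := by
    rw [← sum_mul, ← mul_sum, sum_erase_eq_sub (mem_univ i), hsum, mul_sub, mul_one, hidem,
      sub_self, zero_mul]
  have hji : p j * p i = 0 := by
    rw [sum_eq_zero_iff_of_nonneg fun k _ => hsandwich k ▸ star_mul_self_nonneg _] at hsum_sandwich
    have := hsum_sandwich j (mem_erase.mpr ⟨hij.symm, mem_univ j⟩)
    rwa [hsandwich, CStarRing.star_mul_self_eq_zero_iff] at this
  simpa [hstar] using congrArg star hji

section Intertwines

variable {R A V W : Type*} [CommSemiring R] [AddCommMonoid A] [Module R A]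
  [Fintype V] [Fintype W]

/-- `Intertwines M N u` says `M u = u N`, for `u` a `V × W` matrix with entries in `A`. -/
def Intertwines (M : Matrix V V R) (N : Matrix W W R) (u : V → W → A) : Prop :=
  ∀ x y', ∑ x', M x x' • u x' y' = ∑ y, N y y' • u x y

namespace Intertwines

variable {u : V → W → A}

lemma one [DecidableEq V] [DecidableEq W] : Intertwines (1 : Matrix V V R) 1 u := by
  intro x y'
  simp [Matrix.one_apply, ite_smul]

lemma mul {M M' : Matrix V V R} {N N' : Matrix W W R} (h : Intertwines M N u)
    (h' : Intertwines M' N' u) : Intertwines (M * M') (N * N') u := by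
  intro x y'
  calc ∑ x', (M * M') x x' • u x' y'
      = ∑ x₁, M x x₁ • ∑ x', M' x₁ x' • u x' y' := by
        simp only [Matrix.mul_apply, sum_smul, smul_sum, mul_smul]
        exact sum_comm
    _ = ∑ y₁, N' y₁ y' • ∑ x₁, M x x₁ • u x₁ y₁ := by
        simp only [h' _ _, smul_sum]
        rw [sum_comm]
        simp only [smul_comm (M _ _)]
    _ = ∑ y, (N * N') y y' • u x y := by
        simp only [h _ _, Matrix.mul_apply, sum_smul, smul_sum, mul_smul]
        rw [sum_comm]
        simp only [smul_comm (N' _ _)]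

lemma pow [DecidableEq V] [DecidableEq W] {M : Matrix V V R} {N : Matrix W W R}
    (h : Intertwines M N u) (ℓ : ℕ) : Intertwines (M ^ ℓ) (N ^ ℓ) u := by
  induction ℓ with
  | zero => exact one
  | succ ℓ ih => simpa only [pow_succ] using ih.mul h

end Intertwines

end Intertwines

lemma Intertwines.apply_eq_of_mul_ne_zero {𝕜 A V W : Type*} [Field 𝕜] [Ring A] [Algebra 𝕜 A]
    [Fintype V] [Fintype W] {M : Matrix V V 𝕜} {N : Matrix W W 𝕜} {u : V → W → A}
    (h : Intertwines M N u) (hidem : ∀ x y, u x y * u x y = u x y)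
    (hrow : ∀ x y y', y ≠ y' → u x y * u x y' = 0)
    (hcol : ∀ y x x', x ≠ x' → u x y * u x' y = 0)
    {x x' : V} {y y' : W} (hne : u x y * u x' y' ≠ 0) : M x x' = N y y' := by
  have hsandwich := congrArg (u x y * · * u x' y') (h x y')
  simp only [mul_sum, sum_mul, mul_smul_comm, smul_mul_assoc] at hsandwich
  rw [sum_eq_single_of_mem x' (mem_univ _) fun a _ ha => by rw [mul_assoc, hcol y' a x' ha,
      mul_zero, smul_zero], sum_eq_single_of_mem y (mem_univ _) fun b _ hb => by
      rw [hrow x y b hb.symm, zero_mul, smul_zero], mul_assoc, hidem, hidem] at hsandwich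
  rw [← sub_eq_zero, ← sub_smul, smul_eq_zero] at hsandwich
  exact sub_eq_zero.mp (hsandwich.resolve_right hne)

namespace SimpleGraph

variable {V W : Type*} {X : SimpleGraph V} {Y : SimpleGraph W} {x x' : V} {y y' : W}

lemma exists_walk_length_eq_iff_card_pos [Fintype V] [DecidableEq V] [DecidableRel X.Adj]
    (ℓ : ℕ) :
    (∃ p : X.Walk x x', p.length = ℓ) ↔ 0 < Fintype.card {p : X.Walk x x' | p.length = ℓ} := by
  rw [Fintype.card_pos_iff]
  simp

lemma range_walk_length_eq_of_adjMatrix_pow_apply_eq {R : Type*} [Semiring R] [CharZero R]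
    [Fintype V] [Fintype W] [DecidableEq V] [DecidableEq W]
    [DecidableRel X.Adj] [DecidableRel Y.Adj]
    (h : ∀ ℓ : ℕ, (X.adjMatrix R ^ ℓ) x x' = (Y.adjMatrix R ^ ℓ) y y') :
    Set.range (Walk.length : X.Walk x x' → ℕ) = Set.range (Walk.length : Y.Walk y y' → ℕ) := by
  ext ℓ
  have hcard := h ℓ
  rw [adjMatrix_pow_apply_eq_card_walk, adjMatrix_pow_apply_eq_card_walk, Nat.cast_inj] at hcard
  simp only [Set.mem_range, exists_walk_length_eq_iff_card_pos, hcard]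

lemma reachable_iff_of_range_walk_length_eq
    (h : Set.range (Walk.length : X.Walk x x' → ℕ) = Set.range (Walk.length : Y.Walk y y' → ℕ)) :
    X.Reachable x x' ↔ Y.Reachable y y' := by
  rw [Reachable, Reachable, ← Set.range_nonempty_iff_nonempty, h, Set.range_nonempty_iff_nonempty]

lemma dist_eq_of_range_walk_length_eq
    (h : Set.range (Walk.length : X.Walk x x' → ℕ) = Set.range (Walk.length : Y.Walk y y' → ℕ)) :
    X.dist x x' = Y.dist y y' := by
  rw [dist_eq_sInf, dist_eq_sInf, h]

end SimpleGraph

/-- If `u` is a magic unitary intertwining the adjacency matrices of `X`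
and `Y` (`A_X·U = U·A_Y`) and `u x y * u x' y' ≠ 0`, then for every `ℓ` the number of
walks of length `ℓ` from `x` to `x'` in `X` equals that from `y` to `y'` in `Y`;
consequently `x, x'` are joined by a walk iff `y, y'` are, and in that case the graph
distances agree. -/
theorem walks_and_distance_preserved {A : Type*} [CStarAlgebra A]
    {V W : Type*} [Fintype V] [Fintype W] [DecidableEq V] [DecidableEq W]
    (X : SimpleGraph V) (Y : SimpleGraph W)
    [DecidableRel X.Adj] [DecidableRel Y.Adj]
    (u : V → W → A)
    (hstar : ∀ x y, star (u x y) = u x y)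
    (hidem : ∀ x y, u x y * u x y = u x y)
    (hrow : ∀ x, ∑ y, u x y = 1)
    (hcol : ∀ y, ∑ x, u x y = 1)
    (hAU : ∀ (x : V) (y' : W),
      ∑ x', X.adjMatrix ℂ x x' • u x' y' = ∑ y, Y.adjMatrix ℂ y y' • u x y)
    (x x' : V) (y y' : W) (hne : u x y * u x' y' ≠ 0) :
    (∀ ℓ : ℕ, (X.adjMatrix ℂ ^ ℓ) x x' = (Y.adjMatrix ℂ ^ ℓ) y y') ∧
      (X.Reachable x x' ↔ Y.Reachable y y') ∧
      (X.Reachable x x' → X.dist x x' = Y.dist y y') := by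
  have hrow_orth (a : V) (b b' : W) (hb : b ≠ b') : u a b * u a b' = 0 :=
    mul_eq_zero_of_sum_eq_one (u a) (hstar a) (hidem a) (hrow a) hb
  have hcol_orth (b : W) (a a' : V) (ha : a ≠ a') : u a b * u a' b = 0 :=
    mul_eq_zero_of_sum_eq_one (u · b) (hstar · b) (hidem · b) (hcol b) ha
  have hwalks (ℓ : ℕ) : (X.adjMatrix ℂ ^ ℓ) x x' = (Y.adjMatrix ℂ ^ ℓ) y y' :=
    (Intertwines.pow hAU ℓ).apply_eq_of_mul_ne_zero hidem hrow_orth hcol_orth hne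
  have hlengths := SimpleGraph.range_walk_length_eq_of_adjMatrix_pow_apply_eq hwalks
  exact ⟨hwalks, SimpleGraph.reachable_iff_of_range_walk_length_eq hlengths,
    fun _ => SimpleGraph.dist_eq_of_range_walk_length_eq hlengths⟩
end
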